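/- Let R_+ be a positive subsystem of a Coxeter root system in R^N. Then for all x not on any reflection hyperplane, Σ_{β,γ ∈ R_+, β≠γ} (β,γ)/((β,x)(γ,x)) = 0. -/

import Mathlib

open Finset

noncomputable def dotp {N : ℕ} (u v : Fin N → ℝ) : ℝ := ∑ i, u i * v i

noncomputable def reflct {N : ℕ} (γ x : Fin N → ℝ) : Fin N → ℝ :=
  x - (2 * dotp γ x / dotp γ γ) • γ

/-
Along a generic line `x + r y` the sum is a rational function of `r` with simple poles where the
line meets the hyperplanes `β⊥`, so by partial fractions its value at `x` is a combination of the
residues. The residue at `β⊥`, taken at a point `z` with `(β, z) = 0`, is proportional to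
`∑_{γ ≠ β} (γ, β) / (γ, z)`. This vanishes: `γ ↦ ± s_β γ`, with the sign chosen to stay in `R_+`,
is an involution of `R_+ \ {β}` that negates each term, because `s_β` fixes `z` and negates `β`.
-/

open Matrix

theorem Finset.sum_sum_erase_comm {ι M : Type*} [DecidableEq ι] [AddCommMonoid M]
    (s : Finset ι) (f : ι → ι → M) :
    ∑ i ∈ s, ∑ j ∈ s.erase i, f i j = ∑ j ∈ s, ∑ i ∈ s.erase j, f i j :=
  Finset.sum_comm' fun i j => by simp only [mem_erase]; tauto

-- Partial fractions for `1 / ((a i + r b i) (a j + r b j))` at `r = 0`; the inner sums are, up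
-- to a factor, the residues at `r = -a j / b j`.
theorem Finset.sum_sum_erase_div_mul_eq {ι K : Type*} [DecidableEq ι] [Field K] (s : Finset ι)
    (k : ι → ι → K) (hk : ∀ i j, k i j = k j i) (a b : ι → K) (ha : ∀ i ∈ s, a i ≠ 0)
    (hab : ∀ i ∈ s, ∀ j ∈ s, i ≠ j → a i * b j - a j * b i ≠ 0) :
    ∑ i ∈ s, ∑ j ∈ s.erase i, k i j / (a i * a j) =
      2 * ∑ j ∈ s, b j / a j * ∑ i ∈ s.erase j, k i j / (a i * b j - a j * b i) := by
  set g : ι → ι → K := fun i j => k i j * b j / a j / (a i * b j - a j * b i)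
  have hsplit : ∀ i ∈ s, ∀ j ∈ s.erase i, k i j / (a i * a j) = g i j + g j i := by
    intro i hi j hj
    obtain ⟨hji, hj⟩ := mem_erase.1 hj
    have hD := hab i hi j hj (Ne.symm hji)
    have hD' : a j * b i - a i * b j ≠ 0 := fun h => hD (by linear_combination -h)
    simp only [g, hk j i]
    field_simp [ha i hi, ha j hj]
    ring
  calc ∑ i ∈ s, ∑ j ∈ s.erase i, k i j / (a i * a j)
      = ∑ i ∈ s, ∑ j ∈ s.erase i, g i j + ∑ i ∈ s, ∑ j ∈ s.erase i, g j i := by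
        rw [← sum_add_distrib]
        exact sum_congr rfl fun i hi => by rw [← sum_add_distrib]; exact sum_congr rfl (hsplit i hi)
    _ = 2 * ∑ j ∈ s, ∑ i ∈ s.erase j, g i j := by
        rw [sum_sum_erase_comm s g, two_mul]
    _ = 2 * ∑ j ∈ s, b j / a j * ∑ i ∈ s.erase j, k i j / (a i * b j - a j * b i) := by
        congr 1
        refine sum_congr rfl fun j _ => ?_
        rw [mul_sum]
        refine sum_congr rfl fun i _ => ?_
        simp only [g]
        ring

theorem exists_forall_dotProduct_ne_zero {ι n : Type*} [Finite ι] [Fintype n] (w : ι → n → ℝ)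
    (hw : ∀ i, w i ≠ 0) : ∃ y, ∀ i, w i ⬝ᵥ y ≠ 0 :=
  Module.Dual.exists_forall_ne_zero_of_forall_exists (fun i => dotProductBilin ℝ ℝ (w i))
    fun i => ⟨w i, by simpa [dotProduct_self_eq_zero] using hw i⟩

section Reflection

variable {N : ℕ}

theorem dotp_eq_dotProduct (u v : Fin N → ℝ) : dotp u v = u ⬝ᵥ v := rfl

theorem dotp_comm (u v : Fin N → ℝ) : dotp u v = dotp v u := dotProduct_comm u v

theorem dotp_reflct_self (γ v : Fin N → ℝ) : dotp γ (reflct γ v) = -dotp γ v := by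
  rcases eq_or_ne γ 0 with rfl | hγ
  · simp [dotp_eq_dotProduct]
  have hγγ : γ ⬝ᵥ γ ≠ 0 := dotProduct_self_eq_zero.not.2 hγ
  simp only [reflct, dotp_eq_dotProduct, dotProduct_sub, dotProduct_smul, smul_eq_mul]
  field_simp
  ring

theorem dotp_reflct_of_dotp_eq_zero {γ z : Fin N → ℝ} (hz : dotp γ z = 0) (v : Fin N → ℝ) :
    dotp (reflct γ v) z = dotp v z := by
  simp only [reflct, dotp_eq_dotProduct, sub_dotProduct, smul_dotProduct, smul_eq_mul] at hz ⊢
  rw [hz, mul_zero, sub_zero]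

theorem reflct_reflct (γ v : Fin N → ℝ) : reflct γ (reflct γ v) = v := by
  conv_lhs => rw [reflct, dotp_reflct_self, reflct]
  module

theorem reflct_neg (γ v : Fin N → ℝ) : reflct γ (-v) = -reflct γ v := by
  simp only [reflct, dotp_eq_dotProduct, dotProduct_neg]
  module

theorem reflct_self (γ : Fin N → ℝ) : reflct γ γ = -γ := by
  rcases eq_or_ne γ 0 with rfl | hγ
  · simp [reflct]
  have hγγ : dotp γ γ ≠ 0 := dotProduct_self_eq_zero.not.2 hγ
  rw [reflct, mul_div_assoc, div_self hγγ]
  module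

end Reflection

section PositiveReflection

variable {N : ℕ} [DecidableEq (Fin N → ℝ)]

noncomputable def reflctPos (Rplus : Finset (Fin N → ℝ)) (β γ : Fin N → ℝ) : Fin N → ℝ :=
  if reflct β γ ∈ Rplus then reflct β γ else -reflct β γ

variable {R Rplus : Finset (Fin N → ℝ)} {β : Fin N → ℝ}

theorem reflctPos_eq_or (γ : Fin N → ℝ) :
    reflctPos Rplus β γ = reflct β γ ∨ reflctPos Rplus β γ = -reflct β γ := by
  unfold reflctPos
  split_ifs <;> simp

theorem dotp_reflctPos_div {z : Fin N → ℝ} (hz : dotp β z = 0) (γ : Fin N → ℝ) :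
    dotp (reflctPos Rplus β γ) β / dotp (reflctPos Rplus β γ) z = -(dotp γ β / dotp γ z) := by
  have hβ : dotp (reflct β γ) β = -dotp γ β := by
    rw [dotp_comm, dotp_reflct_self, dotp_comm]
  have hneg (u v : Fin N → ℝ) : dotp (-u) v = -dotp u v := neg_dotProduct u v
  rcases reflctPos_eq_or (Rplus := Rplus) (β := β) γ with h | h
  all_goals rw [h]
  · rw [hβ, dotp_reflct_of_dotp_eq_zero hz, neg_div]
  · rw [hneg, hneg, neg_div_neg_eq, hβ, dotp_reflct_of_dotp_eq_zero hz, neg_div]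

theorem reflctPos_mem (hrefl : ∀ γ ∈ R, ∀ β ∈ R, reflct γ β ∈ R)
    (hpos : ∀ γ, γ ∈ R ↔ (γ ∈ Rplus ∨ -γ ∈ Rplus)) (hβ : β ∈ Rplus)
    {γ : Fin N → ℝ} (hγ : γ ∈ Rplus) : reflctPos Rplus β γ ∈ Rplus := by
  have hR : reflct β γ ∈ R := hrefl β ((hpos β).2 (.inl hβ)) γ ((hpos γ).2 (.inl hγ))
  unfold reflctPos
  split_ifs with h
  · exact h
  · exact ((hpos _).1 hR).resolve_left h

theorem reflctPos_self (hdisj : ∀ γ ∈ Rplus, -γ ∉ Rplus) (hβ : β ∈ Rplus) :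
    reflctPos Rplus β β = β := by
  simp [reflctPos, reflct_self, hdisj β hβ]

theorem reflctPos_reflctPos (hrefl : ∀ γ ∈ R, ∀ β ∈ R, reflct γ β ∈ R)
    (hpos : ∀ γ, γ ∈ R ↔ (γ ∈ Rplus ∨ -γ ∈ Rplus)) (hdisj : ∀ γ ∈ Rplus, -γ ∉ Rplus)
    (hβ : β ∈ Rplus) {γ : Fin N → ℝ} (hγ : γ ∈ Rplus) :
    reflctPos Rplus β (reflctPos Rplus β γ) = γ := by
  have hmem := reflctPos_mem hrefl hpos hβ (reflctPos_mem hrefl hpos hβ hγ)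
  have hpm : reflctPos Rplus β (reflctPos Rplus β γ) = γ ∨
      reflctPos Rplus β (reflctPos Rplus β γ) = -γ := by
    rcases reflctPos_eq_or (Rplus := Rplus) (β := β) (reflctPos Rplus β γ) with h' | h' <;>
    rw [h'] <;>
    rcases reflctPos_eq_or (Rplus := Rplus) (β := β) γ with h | h <;>
    simp [h, reflct_neg, reflct_reflct]
  exact hpm.resolve_right fun h => hdisj γ hγ (h ▸ hmem)

theorem sum_erase_dotp_div_dotp_eq_zero (hrefl : ∀ γ ∈ R, ∀ β ∈ R, reflct γ β ∈ R)
    (hpos : ∀ γ, γ ∈ R ↔ (γ ∈ Rplus ∨ -γ ∈ Rplus)) (hdisj : ∀ γ ∈ Rplus, -γ ∉ Rplus)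
    (hβ : β ∈ Rplus) {z : Fin N → ℝ} (hz : dotp β z = 0) :
    ∑ γ ∈ Rplus.erase β, dotp γ β / dotp γ z = 0 := by
  have hinv {γ} (hγ : γ ∈ Rplus.erase β) :=
    reflctPos_reflctPos hrefl hpos hdisj hβ (mem_of_mem_erase hγ)
  refine sum_involution (fun γ _ => reflctPos Rplus β γ) (fun γ _ => ?_) (fun γ _ hne hfix => ?_)
    (fun γ hγ => ?_) (fun γ hγ => hinv hγ)
  · rw [dotp_reflctPos_div hz, add_neg_cancel]
  · have hanti := dotp_reflctPos_div (Rplus := Rplus) hz γ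
    rw [hfix] at hanti
    exact hne (by linarith)
  · refine mem_erase.2 ⟨fun h => (mem_erase.1 hγ).1 ?_,
      reflctPos_mem hrefl hpos hβ (mem_of_mem_erase hγ)⟩
    rw [← hinv hγ, h, reflctPos_self hdisj hβ]

end PositiveReflection

theorem exists_dotp_mul_sub_ne_zero {N : ℕ} [DecidableEq (Fin N → ℝ)]
    (Rplus : Finset (Fin N → ℝ))
    (hnocol : ∀ γ ∈ Rplus, ∀ β ∈ Rplus, ∀ t : ℝ, β = t • γ → β = γ)
    (x : Fin N → ℝ) (hx : ∀ γ ∈ Rplus, dotp γ x ≠ 0) :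
    ∃ y, ∀ i ∈ Rplus, ∀ j ∈ Rplus, i ≠ j → dotp i x * dotp j y - dotp j x * dotp i y ≠ 0 := by
  have hw (p : Rplus.offDiag) : dotp p.1.1 x • p.1.2 - dotp p.1.2 x • p.1.1 ≠ 0 := by
    obtain ⟨⟨i, j⟩, hij⟩ := p
    obtain ⟨hi, hj, hne⟩ := mem_offDiag.1 hij
    intro h
    refine hne (hnocol i hi j hj (dotp j x / dotp i x) ?_).symm
    rw [sub_eq_zero] at h
    rw [div_eq_inv_mul, mul_smul, ← h, smul_smul, inv_mul_cancel₀ (hx i hi), one_smul]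
  obtain ⟨y, hy⟩ := exists_forall_dotProduct_ne_zero _ hw
  refine ⟨y, fun i hi j hj hij => ?_⟩
  simpa [sub_dotProduct, smul_dotProduct, dotp_eq_dotProduct, dotProduct_comm, mul_comm]
    using hy ⟨(i, j), mem_offDiag.2 ⟨hi, hj, hij⟩⟩

theorem stmt2_general {N : ℕ} [DecidableEq (Fin N → ℝ)]
    (R Rplus : Finset (Fin N → ℝ))
    (hrefl : ∀ γ ∈ R, ∀ β ∈ R, reflct γ β ∈ R)
    (hpos : ∀ γ, γ ∈ R ↔ (γ ∈ Rplus ∨ -γ ∈ Rplus))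
    (hdisj : ∀ γ ∈ Rplus, -γ ∉ Rplus)
    (hnocol : ∀ γ ∈ Rplus, ∀ β ∈ Rplus, ∀ t : ℝ, β = t • γ → β = γ)
    (x : Fin N → ℝ) (hx : ∀ γ ∈ Rplus, dotp γ x ≠ 0) :
    ∑ β ∈ Rplus, ∑ γ ∈ Rplus.erase β, dotp β γ / (dotp β x * dotp γ x) = 0 := by
  obtain ⟨y, hy⟩ := exists_dotp_mul_sub_ne_zero Rplus hnocol x hx
  rw [sum_sum_erase_div_mul_eq Rplus dotp dotp_comm (dotp · x) (dotp · y) hx hy]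
  refine mul_eq_zero_of_right _ (sum_eq_zero fun β hβ => mul_eq_zero_of_right _ ?_)
  have hresidue (γ : Fin N → ℝ) : dotp γ x * dotp β y - dotp β x * dotp γ y =
      dotp γ (dotp β y • x - dotp β x • y) := by
    simp only [dotp_eq_dotProduct, dotProduct_sub, dotProduct_smul, smul_eq_mul]
    ring
  simp only [hresidue]
  exact sum_erase_dotp_div_dotp_eq_zero hrefl hpos hdisj hβ (by rw [← hresidue, sub_self])

/-- For a positive subsystem `Rplus` of a Coxeter root system `R` in `ℝ^N`, and any
`x` off all reflection hyperplanes, `Σ_{β,γ ∈ R_+, β≠γ} (β,γ)/((β,x)(γ,x)) = 0`. -/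
theorem stmt2 {N : ℕ} [DecidableEq (Fin N → ℝ)]
    (R Rplus : Finset (Fin N → ℝ))
    (hnz : ∀ γ ∈ R, γ ≠ 0)
    (hrefl : ∀ γ ∈ R, ∀ β ∈ R, reflct γ β ∈ R)
    (hpos : ∀ γ, γ ∈ R ↔ (γ ∈ Rplus ∨ -γ ∈ Rplus))
    (hdisj : ∀ γ ∈ Rplus, -γ ∉ Rplus)
    (hnocol : ∀ γ ∈ Rplus, ∀ β ∈ Rplus, ∀ t : ℝ, β = t • γ → β = γ)
    (x : Fin N → ℝ) (hx : ∀ γ ∈ Rplus, dotp γ x ≠ 0) :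
    ∑ β ∈ Rplus, ∑ γ ∈ Rplus.erase β, dotp β γ / (dotp β x * dotp γ x) = 0 :=
  stmt2_general R Rplus hrefl hpos hdisj hnocol x hx
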